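/- arXiv:2209.10855 — 2 statements merged into one kernel-verified Lean document; each statement's English description precedes it below -/
import Mathlib

section
/- In the stacked-book graph G_{m,4} = S_m □ P_4 with layers S_m(1),...,S_m(4), if M is an induced matching of size at least m, then M does not contain all the m-1 edges u_iw_i (i = 2,...,m) joining the leaves of the second layer to the corresponding leaves of the third layer. -/
open SimpleGraph

/-- The star graph on `m` vertices: vertex `0` is the center, the rest are leaves. -/
def starGraph (m : ℕ) : SimpleGraph (Fin m) :=
  SimpleGraph.fromRel (fun i _ => i.val = 0)

/-- `M` is an induced matching of `G`: every element of `M` is an edge of `G`, and no two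
distinct edges of `M` share an endpoint or have endpoints joined by an edge of `G`. -/
def IsInducedMatching {V : Type*} (G : SimpleGraph V) (M : Finset (Sym2 V)) : Prop :=
  ↑M ⊆ G.edgeSet ∧
    ∀ e₁ ∈ M, ∀ e₂ ∈ M, e₁ ≠ e₂ → ∀ u ∈ e₁, ∀ v ∈ e₂, u ≠ v ∧ ¬G.Adj u v

/-- The maximum induced matching number of `G`. -/
noncomputable def im {V : Type*} (G : SimpleGraph V) : ℕ :=
  sSup {k | ∃ M : Finset (Sym2 V), IsInducedMatching G M ∧ M.card = k}

/-- The stacked-book graph `G_{m,n} = S_m □ P_n`. -/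
def stackedBook (m n : ℕ) : SimpleGraph (Fin m × Fin n) :=
  starGraph m □ SimpleGraph.pathGraph n

/-! Every vertex of `G_{m,4}` other than the centres of layers 1 and 4 is equal or adjacent to an
endpoint of some `u_i w_i`, and those two centres are not adjacent, so every edge touches one of
the `u_i w_i`. An induced matching containing all of them can therefore contain nothing else, and
has only `m - 1` edges. -/

theorem IsInducedMatching.subset_of_forall_near {V : Type*} {G : SimpleGraph V}
    {M S : Finset (Sym2 V)} (hM : IsInducedMatching G M) (hS : S ⊆ M)
    (hnear : ∀ e ∈ G.edgeSet, e ∉ S →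
      ∃ u ∈ e, ∃ e' ∈ S, ∃ v ∈ e', u = v ∨ G.Adj u v) :
    M ⊆ S := by
  intro e he
  by_contra heS
  obtain ⟨u, hu, e', he', v, hv, huv⟩ := hnear e (hM.1 he) heS
  have hne : e ≠ e' := fun h => heS (h ▸ he')
  have := hM.2 e he e' (hS he') hne u hu v hv
  tauto

theorem stackedBook_adj {m n : ℕ} {x y : Fin m × Fin n} :
    (stackedBook m n).Adj x y ↔
      (x.1 ≠ y.1 ∧ (x.1.val = 0 ∨ y.1.val = 0)) ∧ x.2 = y.2 ∨
        x.1 = y.1 ∧ (x.2.val + 1 = y.2.val ∨ y.2.val + 1 = x.2.val) := by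
  simp only [stackedBook, boxProd_adj, _root_.starGraph, fromRel_adj, pathGraph_adj]
  tauto

/-- The edge `u_i w_i` joining layers 2 and 3 (indices `1` and `2` of `Fin 4`) at leaf `i`. -/
def middleEdge {m : ℕ} (i : Fin m) : Sym2 (Fin m × Fin 4) :=
  s((i, 1), (i, 2))

theorem exists_middleEdge_near {m : ℕ} (hm : 2 ≤ m) (z : Fin m × Fin 4)
    (hz : z.1.val ≠ 0 ∨ z.2 = 1 ∨ z.2 = 2) :
    ∃ i : Fin m, i.val ≠ 0 ∧ ∃ v ∈ middleEdge i, z = v ∨ (stackedBook m 4).Adj z v := by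
  obtain ⟨a, b⟩ := z
  simp only [stackedBook_adj, middleEdge]
  by_cases ha : a.val = 0
  · refine ⟨⟨1, by omega⟩, one_ne_zero, (⟨1, by omega⟩, b), ?_, Or.inr ?_⟩
    · fin_cases b <;> simp_all
    · simp [Fin.ext_iff, ha]
  · refine ⟨a, ha, ?_⟩
    fin_cases b
    · exact ⟨(a, 1), by simp, by simp⟩
    · exact ⟨(a, 1), by simp, by simp⟩
    · exact ⟨(a, 2), by simp, by simp⟩
    · exact ⟨(a, 2), by simp, by simp⟩

theorem exists_mem_of_mem_edgeSet_stackedBook {m : ℕ} {e : Sym2 (Fin m × Fin 4)}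
    (he : e ∈ (stackedBook m 4).edgeSet) :
    ∃ z ∈ e, z.1.val ≠ 0 ∨ z.2 = 1 ∨ z.2 = 2 := by
  induction e using Sym2.ind with
  | _ x y =>
    by_contra! h
    obtain ⟨hx1, hx2, hx3⟩ := h x (Sym2.mem_mk_left x y)
    obtain ⟨hy1, hy2, hy3⟩ := h y (Sym2.mem_mk_right x y)
    rw [mem_edgeSet, stackedBook_adj] at he
    rcases he with ⟨⟨hne, -⟩, -⟩ | ⟨-, hpath⟩
    · exact hne (Fin.ext (hx1.trans hy1.symm))
    · revert hx2 hx3 hy2 hy3 hpath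
      generalize x.2 = a; generalize y.2 = b
      decide +revert

theorem not_all_middle_edges (m : ℕ) (hm : 2 ≤ m)
    (M : Finset (Sym2 (Fin m × Fin 4))) (hM : IsInducedMatching (stackedBook m 4) M)
    (hcard : m ≤ M.card) :
    ¬(∀ i : Fin m, i ≠ ⟨0, by omega⟩ → s((i, (1 : Fin 4)), (i, (2 : Fin 4))) ∈ M) := by
  intro h
  set leaves := Finset.univ.filter fun i : Fin m => i.val ≠ 0
  have hS : leaves.image middleEdge ⊆ M := by
    simp only [Finset.image_subset_iff, Finset.mem_filter, leaves]
    exact fun i hi => h i (Fin.ne_of_val_ne hi.2)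
  have hMS := hM.subset_of_forall_near hS fun e he _ => by
    obtain ⟨z, hz, hnear⟩ := exists_mem_of_mem_edgeSet_stackedBook he
    obtain ⟨i, hi, v, hv, hzv⟩ := exists_middleEdge_near hm z hnear
    have hi : i ∈ leaves := by simpa [leaves] using hi
    exact ⟨z, hz, middleEdge i, Finset.mem_image_of_mem _ hi, v, hv, hzv⟩
  have hleaves : leaves.card < m := by
    have hproper : leaves ⊂ Finset.univ :=
      Finset.filter_ssubset.2 ⟨⟨0, by omega⟩, Finset.mem_univ _, not_not.2 rfl⟩
    calc leaves.card < (Finset.univ : Finset (Fin m)).card := Finset.card_lt_card hproper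
      _ = m := Finset.card_fin m
  have := (Finset.card_le_card hMS).trans Finset.card_image_le
  omega
end

section
/- For the stacked-book graph G_{m,n} = S_m □ P_n with n even: if n ≡ 2 (mod 4) then im(G_{m,n}) ≥ m·⌈n/4⌉ - 1, and if n ≡ 0 (mod 4) then im(G_{m,n}) ≥ mn/4. -/
/-!
On every page of the book take the rungs `{(i, j), (i, j + 1)}` with `j` in a fixed residue
class mod 4, the class of the spine (the copy of `P_n` over the center) being shifted by 2 from
that of the other pages. Two rungs on one page are then at distance at least 3, and the only
edges between pages join a spine vertex to a leaf-page vertex at the same level, where the shift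
keeps the rungs apart. For `n = 4q` every page carries `q` rungs; for `n = 4q + 2`, starting the
leaf pages at level 0 gives each of them `q + 1` rungs and the spine `q`.
-/

open SimpleGraph

open Finset

theorem IsInducedMatching.card_le_im {V : Type*} [Finite V] {G : SimpleGraph V}
    {M : Finset (Sym2 V)} (h : IsInducedMatching G M) : #M ≤ im G := by
  have := Fintype.ofFinite V
  classical
  refine le_csSup ⟨Fintype.card (Sym2 V), ?_⟩ ⟨M, h, rfl⟩
  rintro k ⟨N, -, rfl⟩
  exact N.card_le_univ

section Rungs

variable {α : Type*} {N : ℕ}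

def rung (p : α × Fin N) : Sym2 (α × Fin (N + 1)) :=
  s((p.1, p.2.castSucc), (p.1, p.2.succ))

lemma mem_rung {p : α × Fin N} {u : α × Fin (N + 1)} :
    u ∈ rung p ↔ u.1 = p.1 ∧ (u.2.val = p.2.val ∨ u.2.val = p.2.val + 1) := by
  obtain ⟨a, j⟩ := p
  obtain ⟨b, k⟩ := u
  simp only [rung, Sym2.mem_iff, Prod.mk.injEq, Fin.ext_iff, Fin.val_castSucc, Fin.val_succ]
  tauto

lemma rung_injective : Function.Injective (rung : α × Fin N → _) := by
  intro p q h
  have hp : (p.1, p.2.castSucc) ∈ rung q := h ▸ Sym2.mem_mk_left _ _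
  have hq : (q.1, q.2.castSucc) ∈ rung p := h ▸ Sym2.mem_mk_left _ _
  rw [mem_rung] at hp hq
  simp only [Fin.val_castSucc] at hp hq
  exact Prod.ext hp.1 (Fin.ext (by omega))

lemma rung_mem_edgeSet (G : SimpleGraph α) (p : α × Fin N) :
    rung p ∈ (G □ pathGraph (N + 1)).edgeSet := by
  simp [rung, boxProd_adj, pathGraph_adj]

theorem isInducedMatching_image_rung [DecidableEq α] (G : SimpleGraph α) (R : Finset (α × Fin N))
    (hsame : ∀ p ∈ R, ∀ q ∈ R, p.1 = q.1 → p ≠ q →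
      p.2.val + 2 < q.2.val ∨ q.2.val + 2 < p.2.val)
    (hadj : ∀ p ∈ R, ∀ q ∈ R, G.Adj p.1 q.1 →
      p.2.val + 1 < q.2.val ∨ q.2.val + 1 < p.2.val) :
    IsInducedMatching (G □ pathGraph (N + 1)) (R.image rung) := by
  refine ⟨?_, ?_⟩
  · rintro _ hr
    obtain ⟨p, -, rfl⟩ := mem_image.mp (mem_coe.mp hr)
    exact rung_mem_edgeSet G p
  rintro _ he₁ _ he₂ hne u hu v hv
  obtain ⟨p, hp, rfl⟩ := mem_image.mp he₁
  obtain ⟨q, hq, rfl⟩ := mem_image.mp he₂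
  have hpq : p ≠ q := fun h => hne (h ▸ rfl)
  rw [mem_rung] at hu hv
  rw [boxProd_adj, pathGraph_adj]
  by_cases h : p.1 = q.1
  · have hgap := hsame p hp q hq h hpq
    refine ⟨fun huv => ?_, ?_⟩
    · subst huv; omega
    rintro (⟨hG, -⟩ | ⟨hpath, -⟩)
    · exact G.irrefl (by rwa [hu.1, hv.1, h] at hG)
    · omega
  · refine ⟨fun huv => h (by rw [← hu.1, ← hv.1, huv]), ?_⟩
    rintro (⟨hG, hlevel⟩ | ⟨-, hcopy⟩)
    · rw [hu.1, hv.1] at hG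
      have hgap := hadj p hp q hq hG
      rw [Fin.ext_iff] at hlevel
      omega
    · exact h (by rw [← hu.1, ← hv.1, hcopy])

end Rungs

lemma starGraph_adj {m : ℕ} {i j : Fin m} :
    (_root_.starGraph m).Adj i j ↔ i ≠ j ∧ (i.val = 0 ∨ j.val = 0) := by
  rw [_root_.starGraph, fromRel_adj]

lemma card_filter_fin_val_eq_count (N : ℕ) (P : ℕ → Prop) [DecidablePred P] :
    #{j : Fin N | P j} = N.count P := by
  rw [Nat.count_eq_card_filter_range, ← Nat.Iio_eq_range, ← Fin.map_valEmbedding_univ,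
    filter_map, card_map]
  rfl

def stackedBookRungs (m N c : ℕ) : Finset (Fin m × Fin N) :=
  {p | p.2.val ≡ (if p.1.val = 0 then c else c + 2) [MOD 4]}

lemma mem_stackedBookRungs {m N c : ℕ} {p : Fin m × Fin N} :
    p ∈ stackedBookRungs m N c ↔ p.2.val % 4 = (if p.1.val = 0 then c else c + 2) % 4 := by
  rw [stackedBookRungs, mem_filter, Nat.ModEq]
  exact and_iff_right (mem_univ p)

theorem card_stackedBookRungs_le_im (m N c : ℕ) :
    #(stackedBookRungs m N c) ≤ im (stackedBook m (N + 1)) := by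
  rw [← card_image_of_injective _ rung_injective]
  refine IsInducedMatching.card_le_im (isInducedMatching_image_rung (_root_.starGraph m) _ ?_ ?_)
  · intro p hp q hq hpage hpq
    have hlevel : p.2.val ≠ q.2.val := fun h => hpq (Prod.ext hpage (Fin.ext h))
    rw [mem_stackedBookRungs, hpage] at hp
    rw [mem_stackedBookRungs] at hq
    split_ifs at hp hq <;> omega
  · intro p hp q hq hadj
    rw [_root_.starGraph_adj, Ne, Fin.ext_iff] at hadj
    rw [mem_stackedBookRungs] at hp hq
    split_ifs at hp hq <;> omega

lemma card_stackedBookRungs (m N c : ℕ) :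
    #(stackedBookRungs (m + 1) N c) =
      N.count (· ≡ c [MOD 4]) + m * N.count (· ≡ c + 2 [MOD 4]) := by
  rw [stackedBookRungs, card_filter, Fintype.sum_prod_type, Fin.sum_univ_succ]
  simp only [← card_filter, Fin.val_zero, Fin.val_succ]
  simp [card_filter_fin_val_eq_count N (· ≡ c [MOD 4]),
    card_filter_fin_val_eq_count N (· ≡ c + 2 [MOD 4])]

theorem im_stackedBook_even_lower_general (m n : ℕ) :
    (n % 4 = 2 → m * ((n + 3) / 4) - 1 ≤ im (stackedBook m n)) ∧
    (n % 4 = 0 → m * n / 4 ≤ im (stackedBook m n)) := by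
  obtain _ | m := m
  · simp
  obtain _ | N := n
  · simp
  have hrungs (c : ℕ) :=
    (card_stackedBookRungs m N c).symm.trans_le (card_stackedBookRungs_le_im (m + 1) N c)
  constructor
  · intro h
    obtain ⟨q, rfl⟩ : ∃ q, N = 4 * q + 1 := ⟨N / 4, by omega⟩
    have hcard := hrungs 2
    norm_num [Nat.count_modEq_card, show (4 * q + 1) / 4 = q by omega] at hcard
    rw [show (4 * q + 1 + 1 + 3) / 4 = q + 1 by omega, add_one_mul]
    omega
  · intro h
    obtain ⟨q, rfl⟩ : ∃ q, N = 4 * q + 3 := ⟨N / 4, by omega⟩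
    have hcard := hrungs 0
    norm_num [Nat.count_modEq_card, show (4 * q + 3) / 4 = q by omega] at hcard
    rw [show (m + 1) * (4 * q + 3 + 1) = 4 * ((m + 1) * (q + 1)) by ring,
      Nat.mul_div_cancel_left _ four_pos, add_one_mul]
    omega

theorem im_stackedBook_even_lower (m n : ℕ) (hn : n % 2 = 0) :
    (n % 4 = 2 → m * ((n + 3) / 4) - 1 ≤ im (stackedBook m n)) ∧
    (n % 4 = 0 → m * n / 4 ≤ im (stackedBook m n)) :=
  im_stackedBook_even_lower_general m n
end
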